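/- arXiv:1703.02404 — 5 statements merged into one kernel-verified Lean document; each statement's English description precedes it below -/
import Mathlib

section
/- Let N, k, j be positive integers with N > j(k+1), and let φ_{k,j} ∈ ℂ^N be the scale-j order-k finite-difference stencil. Then for every ξ ∈ {0, 1, …, N−1}, the denominator-cleared discrete Fourier transform identity holds: (e^{2πiξ/N} − 1) · Σ_{m=0}^{N−1} (φ_{k,j})_m e^{−2πi m ξ/N} = (e^{2πiξ j/N} − 1)^{k+1}. -/
open Finset

/-- The scale-`j` order-`k` multiscale finite-difference stencil, as a vector in `ℂ^N`
(0-indexed by naturals `m < N`). -/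
noncomputable def phiC (N k j : ℕ) (m : ℕ) : ℂ :=
  if m = 0 then (-1 : ℂ) ^ k
  else if m ≤ N - j * (k + 1) then 0
  else (-1 : ℂ) ^ (k + (N - m) / j) * (Nat.choose k ((N - m) / j) : ℂ)

theorem dft_phi_denominator_cleared (N k j : ℕ) (hN : 0 < N) (hk : 0 < k) (hj : 0 < j)
    (h : j * (k + 1) < N) (ξ : ℕ) (hξ : ξ < N) :
    (Complex.exp (2 * (Real.pi : ℂ) * Complex.I * (ξ : ℂ) / (N : ℂ)) - 1) *
        ∑ m ∈ Finset.range N,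
          phiC N k j m *
            Complex.exp (-(2 * (Real.pi : ℂ) * Complex.I * (m : ℂ) * (ξ : ℂ) / (N : ℂ))) =
      (Complex.exp (2 * (Real.pi : ℂ) * Complex.I * (ξ : ℂ) * (j : ℂ) / (N : ℂ)) - 1) ^ (k + 1) := by
  have hNz : (N : ℂ) ≠ 0 := Nat.cast_ne_zero.mpr hN.ne'
  set ω : ℂ := Complex.exp (2 * (Real.pi : ℂ) * Complex.I * (ξ : ℂ) / (N : ℂ)) with hω
  set z : ℂ := Complex.exp (-(2 * (Real.pi : ℂ) * Complex.I * (ξ : ℂ) / (N : ℂ))) with hz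
  have hz0 : z ≠ 0 := Complex.exp_ne_zero _
  have hzω : z * ω = 1 := by
    rw [hz, hω, ← Complex.exp_add, neg_add_cancel, Complex.exp_zero]
  have hzN : z ^ N = 1 := by
    rw [hz, ← Complex.exp_nat_mul]
    have : (N : ℂ) * -(2 * (Real.pi : ℂ) * Complex.I * (ξ : ℂ) / (N : ℂ))
        = ((-(ξ : ℤ) : ℤ) : ℂ) * (2 * (Real.pi : ℂ) * Complex.I) := by
      push_cast; field_simp
    rw [this, Complex.exp_int_mul_two_pi_mul_I]
  -- z^((N-r)%N) = ω^r for r < N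
  have hpow : ∀ r < N, z ^ ((N - r) % N) = ω ^ r := by
    intro r hr
    rcases Nat.eq_zero_or_pos r with rfl | hr0
    · simp
    · rw [Nat.mod_eq_of_lt (by omega)]
      have e1 : z ^ (N - r) * z ^ r = 1 := by
        rw [← pow_add, Nat.sub_add_cancel hr.le, hzN]
      have e2 : ω ^ r * z ^ r = 1 := by
        rw [← mul_pow, mul_comm ω z, hzω, one_pow]
      exact mul_right_cancel₀ (pow_ne_zero _ hz0) (e1.trans e2.symm)
  -- step 1: replace exponentials by z^m
  have h1 : ∑ m ∈ Finset.range N, phiC N k j m *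
      Complex.exp (-(2 * (Real.pi : ℂ) * Complex.I * (m : ℂ) * (ξ : ℂ) / (N : ℂ)))
      = ∑ m ∈ Finset.range N, phiC N k j m * z ^ m := by
    refine Finset.sum_congr rfl fun m _ => ?_
    rw [hz, ← Complex.exp_nat_mul]
    congr 2
    ring
  -- step 2: reindex by r = (N - m) % N (an involution on range N)
  have h2 : ∑ m ∈ Finset.range N, phiC N k j m * z ^ m
      = ∑ r ∈ Finset.range N, phiC N k j ((N - r) % N) * z ^ ((N - r) % N) := by
    refine Finset.sum_nbij' (fun m => (N - m) % N) (fun r => (N - r) % N) ?_ ?_ ?_ ?_ ?_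
    · intro a ha; exact Finset.mem_range.mpr (Nat.mod_lt _ hN)
    · intro a ha; exact Finset.mem_range.mpr (Nat.mod_lt _ hN)
    · intro a ha
      have ha' : a < N := Finset.mem_range.mp ha
      show (N - (N - a) % N) % N = a
      rcases Nat.eq_zero_or_pos a with rfl | ha0
      · simp
      · rw [Nat.mod_eq_of_lt (show N - a < N by omega),
          Nat.mod_eq_of_lt (show N - (N - a) < N by omega)]; omega
    · intro a ha
      have ha' : a < N := Finset.mem_range.mp ha
      show (N - (N - a) % N) % N = a
      rcases Nat.eq_zero_or_pos a with rfl | ha0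
      · simp
      · rw [Nat.mod_eq_of_lt (show N - a < N by omega),
          Nat.mod_eq_of_lt (show N - (N - a) < N by omega)]; omega
    · intro a ha
      have ha' : a < N := Finset.mem_range.mp ha
      show phiC N k j a * z ^ a
          = phiC N k j ((N - (N - a) % N) % N) * z ^ ((N - (N - a) % N) % N)
      rcases Nat.eq_zero_or_pos a with rfl | ha0
      · simp
      · rw [Nat.mod_eq_of_lt (show N - a < N by omega),
          Nat.mod_eq_of_lt (show N - (N - a) < N by omega)]
        have : N - (N - a) = a := by omega
        rw [this]
  -- step 3: restrict to range (j*(k+1)) and identify coefficients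
  have h3 : ∑ r ∈ Finset.range N, phiC N k j ((N - r) % N) * z ^ ((N - r) % N)
      = ∑ r ∈ Finset.range (j * (k + 1)),
          ((-1 : ℂ) ^ (k + r / j) * (Nat.choose k (r / j) : ℂ)) * ω ^ r := by
    rw [← Finset.sum_subset (Finset.range_subset_range.mpr h.le)]
    · refine Finset.sum_congr rfl fun r hr => ?_
      have hr' : r < j * (k + 1) := Finset.mem_range.mp hr
      rw [hpow r (by omega)]
      congr 1
      rcases Nat.eq_zero_or_pos r with rfl | hr0
      · simp [phiC, Nat.zero_div]
      · rw [Nat.mod_eq_of_lt (by omega)]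
        have hne : N - r ≠ 0 := by omega
        have hgt : ¬ (N - r ≤ N - j * (k + 1)) := by omega
        rw [phiC, if_neg hne, if_neg hgt]
        have : N - (N - r) = r := by omega
        rw [this]
    · intro r hrN hr
      have hr1 : j * (k + 1) ≤ r := by
        by_contra hc; exact hr (Finset.mem_range.mpr (by omega))
      have hrN' : r < N := Finset.mem_range.mp hrN
      have hr0 : 0 < r := by nlinarith
      rw [Nat.mod_eq_of_lt (by omega)]
      have hne : N - r ≠ 0 := by omega
      have hle : N - r ≤ N - j * (k + 1) := by omega
      rw [phiC, if_neg hne, if_pos hle, zero_mul]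
  -- step 4: double sum decomposition r = j*q + s
  have h4 : ∑ r ∈ Finset.range (j * (k + 1)),
      ((-1 : ℂ) ^ (k + r / j) * (Nat.choose k (r / j) : ℂ)) * ω ^ r
      = ∑ p ∈ Finset.range (k + 1) ×ˢ Finset.range j,
          ((-1 : ℂ) ^ (k + p.1) * (Nat.choose k p.1 : ℂ)) * ((ω ^ j) ^ p.1 * ω ^ p.2) := by
    refine (Finset.sum_nbij' (fun p : ℕ × ℕ => j * p.1 + p.2) (fun r => (r / j, r % j))
      ?_ ?_ ?_ ?_ ?_).symm
    · rintro ⟨q, s⟩ hp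
      rw [Finset.mem_product, Finset.mem_range, Finset.mem_range] at hp
      refine Finset.mem_range.mpr ?_
      calc j * q + s < j * q + j := by omega
        _ ≤ j * (k + 1) := by nlinarith [hp.1]
    · intro r hr
      have hr' : r < j * (k + 1) := Finset.mem_range.mp hr
      rw [Finset.mem_product, Finset.mem_range, Finset.mem_range]
      exact ⟨Nat.div_lt_of_lt_mul (by omega), Nat.mod_lt _ hj⟩
    · rintro ⟨q, s⟩ hp
      rw [Finset.mem_product, Finset.mem_range, Finset.mem_range] at hp
      have h1 : (j * q + s) / j = q := by
        rw [Nat.mul_add_div hj, Nat.div_eq_of_lt hp.2, add_zero]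
      have h2 : (j * q + s) % j = s := by
        rw [Nat.mul_add_mod, Nat.mod_eq_of_lt hp.2]
      simp [h1, h2]
    · intro r hr
      exact Nat.div_add_mod r j
    · rintro ⟨q, s⟩ hp
      rw [Finset.mem_product, Finset.mem_range, Finset.mem_range] at hp
      have hd : (j * q + s) / j = q := by
        rw [Nat.mul_add_div hj, Nat.div_eq_of_lt hp.2, add_zero]
      rw [← pow_mul, ← pow_add]
      simp [hd]
  -- step 5: factor product of sums
  have h5 : ∑ p ∈ Finset.range (k + 1) ×ˢ Finset.range j,
      ((-1 : ℂ) ^ (k + p.1) * (Nat.choose k p.1 : ℂ)) * ((ω ^ j) ^ p.1 * ω ^ p.2)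
      = (∑ q ∈ Finset.range (k + 1), (-1 : ℂ) ^ (k + q) * (Nat.choose k q : ℂ) * (ω ^ j) ^ q)
        * ∑ s ∈ Finset.range j, ω ^ s := by
    rw [Finset.sum_product, Finset.sum_mul]
    refine Finset.sum_congr rfl fun q _ => ?_
    rw [Finset.mul_sum]
    refine Finset.sum_congr rfl fun s _ => ?_
    ring
  have h6 : (∑ q ∈ Finset.range (k + 1), (-1 : ℂ) ^ (k + q) * (Nat.choose k q : ℂ) * (ω ^ j) ^ q)
      = (ω ^ j - 1) ^ k := by
    rw [sub_pow]
    refine Finset.sum_congr rfl fun q _ => ?_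
    rw [one_pow, add_comm q k]
    ring
  have hωj : Complex.exp (2 * (Real.pi : ℂ) * Complex.I * (ξ : ℂ) * (j : ℂ) / (N : ℂ)) = ω ^ j := by
    rw [hω, ← Complex.exp_nat_mul]
    congr 1
    ring
  rw [h1, h2, h3, h4, h5, h6, hωj]
  calc (ω - 1) * ((ω ^ j - 1) ^ k * ∑ s ∈ Finset.range j, ω ^ s)
      = (ω ^ j - 1) ^ k * ((∑ s ∈ Finset.range j, ω ^ s) * (ω - 1)) := by ring
    _ = (ω ^ j - 1) ^ k * (ω ^ j - 1) := by rw [geom_sum_mul]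
    _ = (ω ^ j - 1) ^ (k + 1) := by rw [pow_succ]
end

section
/- Let N, k, j be positive integers with N > j(k+1), and let φ_{k,j} ∈ ℂ^N be the scale-j order-k finite-difference stencil. Then for every ξ ∈ {1, …, N−1} (so that e^{2πiξ/N} ≠ 1), the discrete Fourier transform of φ_{k,j} satisfies F(φ_{k,j})_ξ = (e^{2πiξ j/N} − 1)^{k+1} / (e^{2πiξ/N} − 1). -/
/-!
With `z = exp (2πiξ/N)`, a nontrivial `N`-th root of unity, the kernel `exp (-2πimξ/N)` is
`z ^ ((N - m) % N)`, and the stencil is the reflection `m ↦ (N - m) % N` of the coefficient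
vector of `(X ^ j - 1) ^ k * (1 + X + ⋯ + X ^ (j - 1))`. So the transform is that polynomial
evaluated at `z`, i.e. `(z ^ j - 1) ^ (k + 1) / (z - 1)`.
-/

open Finset

/-- The coefficient of `X ^ n` in `(X ^ j - 1) ^ k * (1 + X + ⋯ + X ^ (j - 1))`. -/
def stencilCoeff (R : Type*) [Ring R] (k j n : ℕ) : R :=
  (-1) ^ (k + n / j) * (k.choose (n / j) : R)

lemma stencilCoeff_eq_zero {R : Type*} [Ring R] {k j n : ℕ} (hj : 0 < j)
    (hn : j * (k + 1) ≤ n) : stencilCoeff R k j n = 0 := by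
  have hk : k < n / j := (Nat.le_div_iff_mul_le hj).2 (by rw [mul_comm]; exact hn)
  simp [stencilCoeff, Nat.choose_eq_zero_of_lt hk]

lemma sum_range_mul_div_mul_pow {R : Type*} [CommSemiring R] (c : ℕ → R) (z : R) {j : ℕ}
    (hj : 0 < j) (s : ℕ) :
    ∑ n ∈ range (j * s), c (n / j) * z ^ n =
      (∑ q ∈ range s, c q * z ^ (j * q)) * ∑ r ∈ range j, z ^ r := by
  induction s with
  | zero => simp only [mul_zero, range_zero, sum_empty, zero_mul]
  | succ s ih =>
    rw [Nat.mul_succ, sum_range_add, ih, sum_range_succ, add_mul]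
    congr 1
    rw [mul_sum]
    refine sum_congr rfl fun r hr => ?_
    rw [Nat.mul_add_div hj, Nat.div_eq_of_lt (mem_range.1 hr), add_zero, pow_add]
    ring

lemma sum_stencilCoeff_mul_pow {R : Type*} [CommRing R] (z : R) {k j N : ℕ} (hj : 0 < j)
    (hN : j * (k + 1) ≤ N) :
    ∑ n ∈ range N, stencilCoeff R k j n * z ^ n = (z ^ j - 1) ^ k * ∑ r ∈ range j, z ^ r := by
  obtain ⟨t, rfl⟩ := Nat.exists_eq_add_of_le hN
  have htail : ∑ n ∈ range t, stencilCoeff R k j (j * (k + 1) + n) * z ^ (j * (k + 1) + n) = 0 :=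
    sum_eq_zero fun n _ => by rw [stencilCoeff_eq_zero hj (Nat.le_add_right _ _), zero_mul]
  rw [sum_range_add, htail, add_zero]
  refine (sum_range_mul_div_mul_pow (fun q => (-1) ^ (k + q) * (k.choose q : R)) z hj _).trans ?_
  rw [sub_pow]
  congr 1
  refine sum_congr rfl fun q _ => ?_
  rw [one_pow, pow_mul, add_comm k q]
  ring

lemma sum_range_comp_sub_mod {M : Type*} [AddCommMonoid M] (g : ℕ → M) (N : ℕ) :
    ∑ m ∈ range N, g ((N - m) % N) = ∑ n ∈ range N, g n := by
  rcases N.eq_zero_or_pos with rfl | hN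
  · simp
  have : NeZero N := ⟨hN.ne'⟩
  rw [← Fin.sum_univ_eq_sum_range, ← Fin.sum_univ_eq_sum_range g]
  simpa only [Equiv.neg_apply, Fin.val_neg'] using
    Equiv.sum_comp (Equiv.neg (Fin N)) (fun i : Fin N => g i)

lemma inv_pow_eq_pow_sub_mod {K : Type*} [DivisionRing K] {z : K} {N m : ℕ} (hz : z ^ N = 1)
    (hm : m ≤ N) : (z ^ m)⁻¹ = z ^ ((N - m) % N) := by
  rw [← pow_eq_pow_mod _ hz]
  exact inv_eq_of_mul_eq_one_right (by rw [← pow_add, Nat.add_sub_cancel' hm, hz])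

lemma phiC_eq_stencilCoeff {N k j m : ℕ} (hj : 0 < j) (h : j * (k + 1) < N) (hm : m < N) :
    phiC N k j m = stencilCoeff ℂ k j ((N - m) % N) := by
  rcases m.eq_zero_or_pos with rfl | hm0
  · simp [phiC, stencilCoeff]
  rw [Nat.mod_eq_of_lt (by omega), phiC, if_neg hm0.ne']
  split_ifs
  · exact (stencilCoeff_eq_zero hj (by omega)).symm
  · rfl

theorem dft_phi_formula_general (N k j : ℕ) (hj : 0 < j)
    (h : j * (k + 1) < N) (ξ : ℕ) (hξ1 : 1 ≤ ξ) (hξ : ξ < N) :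
    ∑ m ∈ Finset.range N,
        phiC N k j m *
          Complex.exp (-(2 * (Real.pi : ℂ) * Complex.I * (m : ℂ) * (ξ : ℂ) / (N : ℂ))) =
      (Complex.exp (2 * (Real.pi : ℂ) * Complex.I * (ξ : ℂ) * (j : ℂ) / (N : ℂ)) - 1) ^ (k + 1) /
        (Complex.exp (2 * (Real.pi : ℂ) * Complex.I * (ξ : ℂ) / (N : ℂ)) - 1) := by
  have hζ := Complex.isPrimitiveRoot_exp N (by omega)
  set ζ := Complex.exp (2 * Real.pi * Complex.I / N)
  have hexp : ∀ n : ℕ, Complex.exp (2 * Real.pi * Complex.I * n / N) = ζ ^ n := fun n => by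
    rw [← Complex.exp_nat_mul]; ring_nf
  set z := ζ ^ ξ
  have hzN : z ^ N = 1 := by rw [← pow_mul, mul_comm, pow_mul, hζ.pow_eq_one, one_pow]
  have hz1 : z ≠ 1 := hζ.pow_ne_one_of_pos_of_lt (by omega) hξ
  have hkernel : ∀ m : ℕ,
      Complex.exp (-(2 * (Real.pi : ℂ) * Complex.I * (m : ℂ) * (ξ : ℂ) / (N : ℂ))) = (z ^ m)⁻¹ :=
    fun m => by rw [Complex.exp_neg, ← pow_mul, ← hexp]; push_cast; ring_nf
  have hzj : Complex.exp (2 * (Real.pi : ℂ) * Complex.I * (ξ : ℂ) * (j : ℂ) / (N : ℂ)) = z ^ j := by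
    rw [← pow_mul, ← hexp]; push_cast; ring_nf
  calc _ = ∑ m ∈ range N, stencilCoeff ℂ k j ((N - m) % N) * z ^ ((N - m) % N) :=
        sum_congr rfl fun m hm => by
          rw [phiC_eq_stencilCoeff hj h (mem_range.1 hm), hkernel,
            inv_pow_eq_pow_sub_mod hzN (mem_range.1 hm).le]
    _ = ∑ n ∈ range N, stencilCoeff ℂ k j n * z ^ n :=
        sum_range_comp_sub_mod (fun n => stencilCoeff ℂ k j n * z ^ n) N
    _ = (z ^ j - 1) ^ k * ∑ r ∈ range j, z ^ r := sum_stencilCoeff_mul_pow z hj h.le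
    _ = _ := by
      rw [hzj, hexp, eq_div_iff (sub_ne_zero.2 hz1), pow_succ, mul_assoc, geom_sum_mul]

theorem dft_phi_formula (N k j : ℕ) (hN : 0 < N) (hk : 0 < k) (hj : 0 < j)
    (h : j * (k + 1) < N) (ξ : ℕ) (hξ1 : 1 ≤ ξ) (hξ : ξ < N) :
    ∑ m ∈ Finset.range N,
        phiC N k j m *
          Complex.exp (-(2 * (Real.pi : ℂ) * Complex.I * (m : ℂ) * (ξ : ℂ) / (N : ℂ))) =
      (Complex.exp (2 * (Real.pi : ℂ) * Complex.I * (ξ : ℂ) * (j : ℂ) / (N : ℂ)) - 1) ^ (k + 1) /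
        (Complex.exp (2 * (Real.pi : ℂ) * Complex.I * (ξ : ℂ) / (N : ℂ)) - 1) :=
  dft_phi_formula_general N k j hj h ξ hξ1 hξ
end

section
/- Let N, k, j be positive integers with N > j(k+1), and let φ_{k,j} ∈ ℂ^N be the scale-j order-k finite-difference stencil. Then for every ξ ∈ {0, 1, …, N−1}, F(φ_{k,j})_ξ = (e^{2πiξ j/N} − 1)^{k} · Σ_{ℓ=0}^{j−1} e^{2πiξ ℓ/N}. -/
open Finset

theorem dft_phi_factored (N k j : ℕ) (hN : 0 < N) (hk : 0 < k) (hj : 0 < j)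
    (h : j * (k + 1) < N) (ξ : ℕ) (hξ : ξ < N) :
    ∑ m ∈ Finset.range N,
        phiC N k j m *
          Complex.exp (-(2 * (Real.pi : ℂ) * Complex.I * (m : ℂ) * (ξ : ℂ) / (N : ℂ))) =
      (Complex.exp (2 * (Real.pi : ℂ) * Complex.I * (ξ : ℂ) * (j : ℂ) / (N : ℂ)) - 1) ^ k *
        ∑ ℓ ∈ Finset.range j,
          Complex.exp (2 * (Real.pi : ℂ) * Complex.I * (ξ : ℂ) * (ℓ : ℂ) / (N : ℂ)) := by
  have hNne : (N : ℂ) ≠ 0 := Nat.cast_ne_zero.mpr hN.ne'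
  set w : ℂ := Complex.exp (2 * (Real.pi : ℂ) * Complex.I * (ξ : ℂ) / (N : ℂ)) with hw
  have hwpow : ∀ r : ℕ, w ^ r =
      Complex.exp (2 * (Real.pi : ℂ) * Complex.I * (ξ : ℂ) * (r : ℂ) / (N : ℂ)) := by
    intro r
    rw [hw, ← Complex.exp_nat_mul]
    congr 1
    ring
  -- step 1: reindex m ↦ N - m
  have step1 : ∑ m ∈ Finset.range N,
        phiC N k j m *
          Complex.exp (-(2 * (Real.pi : ℂ) * Complex.I * (m : ℂ) * (ξ : ℂ) / (N : ℂ))) =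
      ∑ r ∈ Finset.range N, (if r < j * (k + 1) then
        ((-1 : ℂ) ^ (k + r / j) * (Nat.choose k (r / j) : ℂ)) * w ^ r else 0) := by
    refine Finset.sum_nbij' (fun m => if m = 0 then 0 else N - m)
      (fun r => if r = 0 then 0 else N - r) ?_ ?_ ?_ ?_ ?_
    · intro a ha; simp only [mem_range] at *; split <;> omega
    · intro a ha; simp only [mem_range] at *; split <;> omega
    · intro a ha; simp only [mem_range] at ha
      by_cases h0 : a = 0
      · simp [h0]
      · simp only [if_neg h0, if_neg (show ¬(N - a = 0) by omega)]
        omega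
    · intro a ha; simp only [mem_range] at ha
      by_cases h0 : a = 0
      · simp [h0]
      · simp only [if_neg h0, if_neg (show ¬(N - a = 0) by omega)]
        omega
    · intro m hm
      simp only [mem_range] at hm
      by_cases h0 : m = 0
      · subst h0
        have hpos : 0 < j * (k + 1) := by positivity
        simp [phiC, hpos]
      · simp only [h0, if_neg]
        by_cases hle : m ≤ N - j * (k + 1)
        · have : ¬ (N - m < j * (k + 1)) := by omega
          simp [phiC, h0, hle, this]
        · have hlt : N - m < j * (k + 1) := by omega
          have hcast : ((N - m : ℕ) : ℂ) = (N : ℂ) - (m : ℂ) := by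
            push_cast [Nat.cast_sub hm.le]; ring
          have hexp : Complex.exp (-(2 * (Real.pi : ℂ) * Complex.I * (m : ℂ) * (ξ : ℂ) / (N : ℂ)))
              = w ^ (N - m) := by
            rw [hwpow, hcast,
              show (-(2 * (Real.pi : ℂ) * Complex.I * (m : ℂ) * (ξ : ℂ) / (N : ℂ)))
                = ((-(ξ : ℤ) : ℤ) : ℂ) * (2 * (Real.pi : ℂ) * Complex.I)
                  + 2 * (Real.pi : ℂ) * Complex.I * (ξ : ℂ) * ((N : ℂ) - (m : ℂ)) / (N : ℂ)
                from by push_cast; field_simp; ring,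
              Complex.exp_add, Complex.exp_int_mul_two_pi_mul_I, one_mul]
          simp only [phiC, h0, if_neg, hle, if_false, if_neg, hlt, if_pos, if_true]
          rw [hexp]
  rw [step1]
  -- step 2: restrict to range (j*(k+1))
  have step2 : ∑ r ∈ Finset.range N, (if r < j * (k + 1) then
        ((-1 : ℂ) ^ (k + r / j) * (Nat.choose k (r / j) : ℂ)) * w ^ r else 0) =
      ∑ r ∈ Finset.range (j * (k + 1)),
        ((-1 : ℂ) ^ (k + r / j) * (Nat.choose k (r / j) : ℂ)) * w ^ r := by
    rw [← Finset.sum_subset (Finset.range_subset_range.mpr h.le)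
      (fun x _ hx => by simp only [mem_range] at hx; simp [hx])]
    exact Finset.sum_congr rfl fun x hx => by
      simp only [mem_range] at hx; simp [hx]
  rw [step2]
  -- step 3: double sum
  have step3 : ∑ r ∈ Finset.range (j * (k + 1)),
        ((-1 : ℂ) ^ (k + r / j) * (Nat.choose k (r / j) : ℂ)) * w ^ r =
      ∑ q ∈ Finset.range (k + 1), ∑ ℓ ∈ Finset.range j,
        ((-1 : ℂ) ^ (k + q) * (Nat.choose k q : ℂ)) * ((w ^ j) ^ q * w ^ ℓ) := by
    rw [← Finset.sum_product']
    refine Finset.sum_nbij' (fun r => (r / j, r % j)) (fun p => j * p.1 + p.2) ?_ ?_ ?_ ?_ ?_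
    · intro r hr
      simp only [mem_range, Finset.mem_product] at *
      exact ⟨Nat.div_lt_iff_lt_mul hj |>.mpr (by linarith [hr, Nat.mul_comm j (k+1)]),
        Nat.mod_lt _ hj⟩
    · intro p hp
      simp only [mem_range, Finset.mem_product] at *
      calc j * p.1 + p.2 < j * p.1 + j := by omega
        _ = j * (p.1 + 1) := by ring
        _ ≤ j * (k + 1) := Nat.mul_le_mul_left _ (by omega)
    · intro r hr
      simp only
      exact Nat.div_add_mod r j
    · intro p hp
      simp only [mem_range, Finset.mem_product] at hp
      have h1 : (j * p.1 + p.2) / j = p.1 := by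
        rw [Nat.mul_add_div hj, Nat.div_eq_of_lt hp.2, add_zero]
      have h2 : (j * p.1 + p.2) % j = p.2 := by
        rw [Nat.mul_add_mod, Nat.mod_eq_of_lt hp.2]
      simp [h1, h2]
    · intro r hr
      simp only [mem_range] at hr
      have h1 : (r / j, r % j).1 = r / j := rfl
      have hdecomp : r = j * (r / j) + r % j := (Nat.div_add_mod r j).symm
      simp only [h1]
      rw [show w ^ r = (w ^ j) ^ (r / j) * w ^ (r % j) from by
        conv_lhs => rw [hdecomp]
        rw [pow_add, pow_mul]]
  rw [step3]
  -- step 4: factor sums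
  have step4 : ∑ q ∈ Finset.range (k + 1), ∑ ℓ ∈ Finset.range j,
        ((-1 : ℂ) ^ (k + q) * (Nat.choose k q : ℂ)) * ((w ^ j) ^ q * w ^ ℓ) =
      (∑ q ∈ Finset.range (k + 1), (-1 : ℂ) ^ (k + q) * (Nat.choose k q : ℂ) * (w ^ j) ^ q) *
        (∑ ℓ ∈ Finset.range j, w ^ ℓ) := by
    rw [Finset.sum_mul_sum]
    exact Finset.sum_congr rfl fun q _ => Finset.sum_congr rfl fun ℓ _ => by ring
  rw [step4]
  -- step 5: binomial theorem
  have step5 : ∑ q ∈ Finset.range (k + 1), (-1 : ℂ) ^ (k + q) * (Nat.choose k q : ℂ) * (w ^ j) ^ q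
      = (w ^ j - 1) ^ k := by
    rw [sub_pow]
    exact Finset.sum_congr rfl fun q _ => by rw [add_comm k q]; ring
  rw [step5]
  rw [hwpow j]
  congr 1
  exact Finset.sum_congr rfl fun ℓ _ => hwpow ℓ
end

section
/- Let N, k, s be positive integers with N > 2s(k+1). Let Φ_{k,s} and Φ_{k,2s} be the circulant matrices of the stencils φ_{k,s} and φ_{k,2s} respectively, and let P_s be the N×N 0-1 shift-sum matrix. Then the multiscale finite-difference operator at scale 2s factors through the one at scale s: Φ_{k,2s} = P_s^{k+1} Φ_{k,s}. -/
/-!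
Let `E` be the cyclic shift. As long as `j (k + 1) < N` nothing wraps around, and `Φ_{k,j}` is the
polynomial `(E^j - 1)^k (1 + E + ⋯ + E^(j-1))` in `E`: the binomial coefficients of `(X^j - 1)^k`,
each repeated over a block of length `j`. Since `X^(2s) - 1 = (1 + X^s)(X^s - 1)` and the geometric
sum of length `2s` is `1 + X^s` times the one of length `s`, the polynomial at scale `2s` is
`(1 + X^s)^(k+1)` times the one at scale `s`, and `P_s = 1 + E^s`.
-/

open Finset Matrix

/-- The scale-`j` order-`k` multiscale finite-difference stencil, as a vector in `ℝ^N`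
(0-indexed by naturals `m < N`). -/
noncomputable def phiR (N k j : ℕ) (m : ℕ) : ℝ :=
  if m = 0 then (-1 : ℝ) ^ k
  else if m ≤ N - j * (k + 1) then 0
  else (-1 : ℝ) ^ (k + (N - m) / j) * (Nat.choose k ((N - m) / j) : ℝ)

/-- The `N × N` circulant matrix of the stencil `φ_{k,j}`:
`(Φ_{k,j})_{m,n} = (φ_{k,j})_{(m - n) mod N}`. -/
noncomputable def PhiMat (N k j : ℕ) : Matrix (Fin N) (Fin N) ℝ :=
  Matrix.of fun m n => phiR N k j (((m : ℕ) + N - (n : ℕ)) % N)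

/-- The `N × N` 0-1 shift-sum matrix `P_s` (0-indexed): entry `(m, n)` is `1` if `n = m`
or `n = (m + s) mod N`, and `0` otherwise. -/
def Pmat (N s : ℕ) : Matrix (Fin N) (Fin N) ℝ :=
  Matrix.of fun m n =>
    if ((n : ℕ) = (m : ℕ) ∨ (n : ℕ) = ((m : ℕ) + s) % N) then 1 else 0

open Polynomial
open Fin.NatCast

section shift

variable {R : Type*} {N : ℕ}

variable (R N) in
def shiftMat [Zero R] [One R] (a : Fin N) : Matrix (Fin N) (Fin N) R :=
  Matrix.of fun m n => if n = m + a then 1 else 0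

lemma shiftMat_add [Semiring R] (a b : Fin N) :
    shiftMat R N (a + b) = shiftMat R N a * shiftMat R N b := by
  ext m n
  rw [mul_apply, Finset.sum_eq_single (m + a)]
  · simp [shiftMat, add_assoc]
  · intro t _ ht
    simp [shiftMat, ht]
  · simp

variable [NeZero N]

lemma shiftMat_zero [Semiring R] : shiftMat R N 0 = 1 := by
  ext m n
  simp [shiftMat, one_apply, eq_comm]

lemma shiftMat_natCast [Semiring R] (r : ℕ) : shiftMat R N r = shiftMat R N 1 ^ r := by
  induction r with
  | zero => simp [shiftMat_zero]
  | succ r ih => rw [Nat.cast_succ, shiftMat_add, ih, pow_succ]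

lemma aeval_shiftMat_one_apply [CommSemiring R] {p : R[X]} (hp : p.natDegree < N) (m n : Fin N) :
    aeval (shiftMat R N 1) p m n = p.coeff (n - m : Fin N) := by
  rw [aeval_eq_sum_range' hp, ← Fin.sum_univ_eq_sum_range (fun i => p.coeff i • shiftMat R N 1 ^ i),
    Matrix.sum_apply]
  simp only [← shiftMat_natCast, Fin.cast_val_eq_self]
  simp only [Matrix.smul_apply, shiftMat, of_apply, smul_eq_mul, mul_ite, mul_one, mul_zero,
    eq_comm (a := n), ← eq_sub_iff_add_eq', Finset.sum_ite_eq', Finset.mem_univ, if_true]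

end shift

lemma sum_range_mul_eq_sum_sum {M : Type*} [AddCommMonoid M] (f : ℕ → M) (j n : ℕ) :
    ∑ r ∈ range (j * n), f r = ∑ i ∈ range n, ∑ t ∈ range j, f (j * i + t) := by
  induction n with
  | zero => simp
  | succ n ih => rw [Nat.mul_succ, sum_range_add, ih, sum_range_succ]

section stencil

variable (R : Type*) [CommRing R]

noncomputable def stencilPoly (k j : ℕ) : R[X] := (X ^ j - 1) ^ k * ∑ t ∈ range j, X ^ t

variable {R}

lemma stencilPoly_eq_sum {j : ℕ} (hj : 0 < j) (k : ℕ) :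
    stencilPoly R k j =
      ∑ r ∈ range (j * (k + 1)), C ((-1) ^ (k + r / j) * (k.choose (r / j) : R)) * X ^ r := by
  rw [sum_range_mul_eq_sum_sum, stencilPoly, sub_pow, sum_mul]
  refine sum_congr rfl fun i _ => ?_
  rw [mul_sum]
  refine sum_congr rfl fun t ht => ?_
  rw [Nat.mul_add_div hj, Nat.div_eq_of_lt (mem_range.1 ht), add_zero]
  simp only [one_pow, mul_one, map_mul, map_pow, map_neg, map_one, map_natCast]
  ring

lemma coeff_stencilPoly {j : ℕ} (hj : 0 < j) (k r : ℕ) :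
    (stencilPoly R k j).coeff r =
      if r < j * (k + 1) then (-1) ^ (k + r / j) * (k.choose (r / j) : R) else 0 := by
  simp only [stencilPoly_eq_sum hj, finsetSum_coeff, coeff_C_mul_X_pow, sum_ite_eq, mem_range]

lemma natDegree_stencilPoly_le {j : ℕ} (hj : 0 < j) (k : ℕ) :
    (stencilPoly R k j).natDegree ≤ j * (k + 1) :=
  natDegree_le_iff_coeff_eq_zero.2 fun r hr => by
    rw [coeff_stencilPoly hj, if_neg (by omega)]

lemma stencilPoly_two_mul (k s : ℕ) :
    stencilPoly R k (2 * s) = (1 + X ^ s) ^ (k + 1) * stencilPoly R k s := by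
  have hgeom : ∑ t ∈ range (2 * s), (X : R[X]) ^ t = (1 + X ^ s) * ∑ t ∈ range s, X ^ t := by
    rw [two_mul, sum_range_add, add_mul, one_mul, mul_sum]
    simp only [pow_add]
  have hdiff : (X : R[X]) ^ (2 * s) - 1 = (1 + X ^ s) * (X ^ s - 1) := by ring
  simp only [stencilPoly, hgeom, hdiff, mul_pow]
  ring

end stencil

section circulant

variable {N : ℕ} [NeZero N] {k j : ℕ}

lemma phiR_val_neg (hj : 0 < j) (hjk : j * (k + 1) < N) (a : Fin N) :
    phiR N k j (-a : Fin N) = (stencilPoly ℝ k j).coeff a := by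
  rw [coeff_stencilPoly hj, Fin.val_neg]
  by_cases ha : a = 0
  · simp [ha, phiR, show 0 < j * (k + 1) by positivity]
  · have ha' : 0 < (a : ℕ) := Nat.pos_of_ne_zero (Fin.val_ne_zero_iff.2 ha)
    have haN := a.isLt
    rw [if_neg ha, phiR, if_neg (by omega), Nat.sub_sub_self haN.le]
    split_ifs <;> first | rfl | omega

lemma PhiMat_eq_aeval_stencilPoly (hj : 0 < j) (hjk : j * (k + 1) < N) :
    PhiMat N k j = aeval (shiftMat ℝ N 1) (stencilPoly ℝ k j) := by
  ext m n
  have hdeg := (natDegree_stencilPoly_le (R := ℝ) hj k).trans_lt hjk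
  have hidx : ((m : ℕ) + N - n) % N = (-(n - m) : Fin N) := by
    rw [neg_sub, Fin.val_sub]
    congr 1
    omega
  rw [aeval_shiftMat_one_apply hdeg, ← phiR_val_neg hj hjk, PhiMat, of_apply, hidx]

lemma Pmat_eq_one_add_shiftMat {s : ℕ} (hs : ¬ N ∣ s) : Pmat N s = 1 + shiftMat ℝ N s := by
  have hshift : ∀ m : Fin N, m ≠ m + s := fun m he => hs (Fin.natCast_eq_zero.1 (by simpa using he))
  ext m n
  have hmod : (n : ℕ) = ((m : ℕ) + s) % N ↔ n = m + s := by
    rw [Fin.ext_iff, Fin.val_add, Fin.val_natCast, Nat.add_mod_mod]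
  simp only [Pmat, shiftMat, Matrix.add_apply, one_apply, of_apply, ← Fin.ext_iff, hmod]
  by_cases hnm : n = m
  · subst hnm
    simp [hshift n]
  · simp [hnm, Ne.symm hnm]

end circulant

theorem PhiMat_double_scale_decomposition_general (N k s : ℕ) (hs : 0 < s)
    (h : 2 * s * (k + 1) < N) :
    PhiMat N k (2 * s) = (Pmat N s) ^ (k + 1) * PhiMat N k s := by
  have : NeZero N := ⟨by omega⟩
  have hsk : s * (k + 1) < N := by nlinarith
  have hsN : ¬ N ∣ s := Nat.not_dvd_of_pos_of_lt hs (by nlinarith)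
  rw [PhiMat_eq_aeval_stencilPoly (by omega) h, PhiMat_eq_aeval_stencilPoly hs hsk,
    Pmat_eq_one_add_shiftMat hsN, stencilPoly_two_mul, map_mul, map_pow, map_add, map_one, map_pow,
    aeval_X, shiftMat_natCast]

theorem PhiMat_double_scale_decomposition (N k s : ℕ) (hN : 0 < N) (hk : 0 < k) (hs : 0 < s)
    (h : 2 * s * (k + 1) < N) :
    PhiMat N k (2 * s) = (Pmat N s) ^ (k + 1) * PhiMat N k s :=
  PhiMat_double_scale_decomposition_general N k s hs h
end

section
/- Let k, ℓ be integers with 0 ≤ ℓ ≤ k, and let p = ⌊ℓ/2⌋ (i.e., p = ℓ/2 for ℓ even and p = (ℓ−1)/2 for ℓ odd). Then the following Vandermonde-like binomial identity holds: (−1)^p C(k, p) = Σ_{j=0}^{ℓ} (−1)^j C(k, j) C(k+1, ℓ−j). -/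
open Finset

open Polynomial in
lemma coeff_one_sub_X_pow (n i : ℕ) :
    ((1 - X : ℤ[X]) ^ n).coeff i = (-1 : ℤ) ^ i * (n.choose i : ℤ) := by
  have h1 : (1 - X : ℤ[X]) = (-1 : ℤ[X]) * (X + C (-1)) := by
    simp [mul_add]; ring
  rw [h1, mul_pow, ← C_1, ← C_neg, ← C_pow, coeff_C_mul, coeff_X_add_C_pow]
  rcases le_or_gt i n with hi | hi
  · have : (-1 : ℤ) ^ n * (-1) ^ (n - i) = (-1) ^ i := by
      rw [← pow_add]
      have : n + (n - i) = 2 * (n - i) + i := by omega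
      rw [this, pow_add, pow_mul]
      simp
    rw [← mul_assoc, this]
  · simp [Nat.choose_eq_zero_of_lt hi]

theorem vandermonde_like_identity (k ℓ : ℕ) (h : ℓ ≤ k) :
    (-1 : ℤ) ^ (ℓ / 2) * (Nat.choose k (ℓ / 2) : ℤ) =
      ∑ j ∈ Finset.range (ℓ + 1),
        (-1 : ℤ) ^ j * (Nat.choose k j : ℤ) * (Nat.choose (k + 1) (ℓ - j) : ℤ) := by
  classical
  open Polynomial in
  have key : ((1 - X : ℤ[X]) ^ k * (1 + X) ^ (k + 1)).coeff ℓ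
      = ((Polynomial.expand ℤ 2 ((1 - X) ^ k)) * (1 + X)).coeff ℓ := by
    congr 1
    rw [map_pow, map_sub, map_one, expand_X]
    have h2 : (1 - X ^ 2 : ℤ[X]) = (1 - X) * (1 + X) := by ring
    rw [h2, mul_pow, pow_succ]
    ring
  -- compute LHS of key
  have hL : ((1 - X : ℤ[X]) ^ k * (1 + X) ^ (k + 1)).coeff ℓ
      = ∑ j ∈ Finset.range (ℓ + 1),
        (-1 : ℤ) ^ j * (Nat.choose k j : ℤ) * (Nat.choose (k + 1) (ℓ - j) : ℤ) := by
    rw [Polynomial.coeff_mul, Finset.Nat.sum_antidiagonal_eq_sum_range_succ_mk]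
    refine Finset.sum_congr rfl fun j hj => ?_
    rw [coeff_one_sub_X_pow, coeff_one_add_X_pow]
  -- compute RHS of key
  have hR : ((Polynomial.expand ℤ 2 ((1 - X : ℤ[X]) ^ k)) * (1 + X)).coeff ℓ
      = (-1 : ℤ) ^ (ℓ / 2) * (Nat.choose k (ℓ / 2) : ℤ) := by
    rw [mul_add, mul_one, coeff_add]
    rcases ℓ with _ | m
    · simp [coeff_expand, coeff_one_sub_X_pow, Polynomial.coeff_zero_eq_eval_zero]
    · rw [coeff_mul_X]
      rw [coeff_expand (by norm_num), coeff_expand (by norm_num)]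
      rcases Nat.even_or_odd (m + 1) with he | ho
      · obtain ⟨n, hn⟩ := he
        have hdvd : 2 ∣ (m + 1) := ⟨n, by omega⟩
        have hnd : ¬ 2 ∣ m := by omega
        rw [if_pos hdvd, if_neg hnd, coeff_one_sub_X_pow]
        simp
      · obtain ⟨n, hn⟩ := ho
        have hnd : ¬ 2 ∣ (m + 1) := by omega
        have hdvd : 2 ∣ m := ⟨n, by omega⟩
        rw [if_neg hnd, if_pos hdvd, coeff_one_sub_X_pow]
        have : m / 2 = (m + 1) / 2 := by omega
        rw [this]
        simp
  rw [← hL, key, hR]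
end
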